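/- Let (x_n^+)_{n≥0} and (x_n^-)_{n≥0} be real sequences with x_0^+ = x_0^- = 0, x_1^+ > 0 > x_1^-, satisfying for all n ≥ 1: x_{n+1}^± = (1 + α_n^± + β_n^±) x_n^± − α_n^± x_{n−1}^± − β_n^± x_n^∓, where α_n^±, β_n^± > 0. Then (x_n^+) is strictly increasing and (x_n^-) is strictly decreasing (for n ≥ 0). -/
import Mathlib


/-- Monotonicity of the vertex values of the harmonic function `g₀` on the rope ladder graph:
with `x₀^± = 0`, `x₁^+ > 0 > x₁^-`, and the coupled recurrences
`x_{n+1}^± = (1 + α_n^± + β_n^±) x_n^± − α_n^± x_{n−1}^± − β_n^± x_n^∓` for positive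
coefficients, the sequence `x^+` is strictly increasing and `x^-` is strictly decreasing. -/
theorem stmt_13 (xp xm αp αm βp βm : ℕ → ℝ)
    (hαp : ∀ n, 1 ≤ n → 0 < αp n) (hαm : ∀ n, 1 ≤ n → 0 < αm n)
    (hβp : ∀ n, 1 ≤ n → 0 < βp n) (hβm : ∀ n, 1 ≤ n → 0 < βm n)
    (h0p : xp 0 = 0) (h0m : xm 0 = 0) (h1p : 0 < xp 1) (h1m : xm 1 < 0)
    (hrecp : ∀ n, 1 ≤ n →
      xp (n + 1) = (1 + αp n + βp n) * xp n - αp n * xp (n - 1) - βp n * xm n)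
    (hrecm : ∀ n, 1 ≤ n →
      xm (n + 1) = (1 + αm n + βm n) * xm n - αm n * xm (n - 1) - βm n * xp n) :
    StrictMono xp ∧ StrictAnti xm := by
  have key : ∀ n, xp n < xp (n + 1) ∧ xm (n + 1) < xm n ∧ 0 < xp (n + 1) ∧ xm (n + 1) < 0 := by
    intro n
    induction n with
    | zero =>
      refine ⟨?_, ?_, h1p, h1m⟩
      · rw [h0p]; exact h1p
      · rw [h0m]; exact h1m
    | succ k ih =>
      obtain ⟨hp, hm, hpp, hmm⟩ := ih
      have hk : 1 ≤ k + 1 := Nat.le_add_left 1 k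
      have rp := hrecp (k + 1) hk
      have rm := hrecm (k + 1) hk
      simp only [Nat.add_sub_cancel] at rp rm
      have hap := hαp (k + 1) hk
      have ham := hαm (k + 1) hk
      have hbp := hβp (k + 1) hk
      have hbm := hβm (k + 1) hk
      have h1 : xp (k + 1) < xp (k + 2) := by
        nlinarith [mul_pos hap (sub_pos.mpr hp), mul_pos hbp (sub_pos.mpr (hmm.trans hpp))]
      have h2 : xm (k + 2) < xm (k + 1) := by
        nlinarith [mul_pos ham (sub_pos.mpr hm), mul_pos hbm (sub_pos.mpr (hmm.trans hpp))]
      exact ⟨h1, h2, hpp.trans h1, h2.trans hmm⟩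
  exact ⟨strictMono_nat_of_lt_succ fun n => (key n).1,
    strictAnti_nat_of_succ_lt fun n => (key n).2.1⟩
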